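/- Let M be a metric space with a cocompact action of a group Γ by isometries. If X ⊆ M is eventually large (i.e., for every R > 0 there exists x_R ∈ X with the closed ball B(x_R, R) contained in X) and K ⊆ M is compact, then there exists γ ∈ Γ with γ(K) ⊆ X. -/
import Mathlib


/-- A subset `X` of a metric space is *eventually large* if for every `R > 0` there is a
point `x ∈ X` whose closed `R`-ball is entirely contained in `X`. -/
def EventuallyLarge {M : Type*} [MetricSpace M] (X : Set M) : Prop :=
  ∀ R > 0, ∃ x ∈ X, Metric.closedBall x R ⊆ X

/-- Let `M` be a metric space with a cocompact action of a group `Γ` by isometries.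
If `X ⊆ M` is eventually large and `K ⊆ M` is compact, then some translate `γ(K)`
is contained in `X`. -/
theorem exists_translate_subset_of_eventuallyLarge
    {M : Type*} [MetricSpace M] {Γ : Type*} [Group Γ] [MulAction Γ M]
    (hiso : ∀ γ : Γ, Isometry (fun m : M => γ • m))
    (hcocompact : ∃ (x₀ : M) (R : ℝ), ∀ y : M, ∃ γ : Γ, γ • y ∈ Metric.closedBall x₀ R)
    (X : Set M) (hX : EventuallyLarge X)
    (K : Set M) (hK : IsCompact K) :
    ∃ γ : Γ, (fun m : M => γ • m) '' K ⊆ X := by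
  rcases K.eq_empty_or_nonempty with hKe | ⟨k₀, hk₀⟩
  · exact ⟨1, by simp [hKe]⟩
  obtain ⟨x₀, R₀, hR₀⟩ := hcocompact
  -- K is bounded: K ⊆ closedBall k₀ D
  obtain ⟨D, hD0, hKD⟩ : ∃ D ≥ 0, K ⊆ Metric.closedBall k₀ D := by
    obtain ⟨D, hKD⟩ := (hK.isBounded.subset_closedBall k₀)
    exact ⟨max D 0, le_max_right _ _,
      hKD.trans (Metric.closedBall_subset_closedBall (le_max_left _ _))⟩
  obtain ⟨γ₀, hγ₀⟩ := hR₀ k₀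
  have hR₀0 : 0 ≤ R₀ := le_trans dist_nonneg (Metric.mem_closedBall.1 hγ₀)
  set R : ℝ := D + 2 * R₀ + 1 with hR
  have hRpos : 0 < R := by positivity
  obtain ⟨z, hzX, hball⟩ := hX R hRpos
  obtain ⟨δ, hδ⟩ := hR₀ z
  refine ⟨δ⁻¹ * γ₀, fun y ⟨k, hk, hky⟩ => ?_⟩
  subst hky
  apply hball
  simp only [Metric.mem_closedBall] at hγ₀ hδ ⊢
  have h1 : dist ((δ⁻¹ * γ₀) • k) ((δ⁻¹ * γ₀) • k₀) = dist k k₀ := (hiso _).dist_eq k k₀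
  have h2 : dist ((δ⁻¹ * γ₀) • k₀) z = dist (γ₀ • k₀) (δ • z) := by
    rw [mul_smul]
    have := (hiso δ).dist_eq (δ⁻¹ • γ₀ • k₀) z
    simp only [smul_inv_smul] at this
    exact this.symm
  calc dist ((δ⁻¹ * γ₀) • k) z ≤ dist ((δ⁻¹ * γ₀) • k) ((δ⁻¹ * γ₀) • k₀)
        + dist ((δ⁻¹ * γ₀) • k₀) z := dist_triangle _ _ _
    _ ≤ D + (dist (γ₀ • k₀) x₀ + dist x₀ (δ • z)) := by
        rw [h1, h2]
        exact add_le_add (hKD hk) (dist_triangle _ _ _)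
    _ ≤ D + (R₀ + R₀) := by
        have : dist x₀ (δ • z) ≤ R₀ := by rw [dist_comm]; exact hδ
        gcongr
    _ ≤ R := by rw [hR]; linarith
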